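/- arXiv:2210.06638 — 6 statements merged into one kernel-verified Lean document; each statement's English description precedes it below -/
import Mathlib

section
/- Every length-factorial monoid is a finite factorization monoid. That is, if M is a cancellative commutative monoid that is atomic and no non-unit element of M admits two distinct factorizations into atoms of the same length, then every non-unit element of M admits only finitely many factorizations into atoms (up to associates and reordering). -/
/-- The set of factorizations of `x` into atoms, taken up to associates and
reordering: multisets of irreducible elements of `Associates M` whose product
is the associate class of `x`. -/
def FactorizationsOf {M : Type*} [CancelCommMonoid M] (x : M) :
    Set (Multiset (Associates M)) :=
  {z | (∀ a ∈ z, Irreducible a) ∧ z.prod = Associates.mk x}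

/-- Cancellation in `Associates M` against a class `Associates.mk x`. -/
lemma assoc_mk_mul_cancel {M : Type*} [CancelCommMonoid M] {x : M} {t : Associates M}
    (h : Associates.mk x * t = Associates.mk x) : t = 1 := by
  obtain ⟨c, rfl⟩ := Associates.mk_surjective t
  rw [Associates.mk_mul_mk, Associates.mk_eq_mk_iff_associated] at h
  obtain ⟨u, hu⟩ := h
  have hcu : c * (u : M) = 1 := by
    apply mul_left_cancel (a := x)
    rw [mul_one, ← mul_assoc]
    exact hu
  exact Associates.mk_eq_one.mpr (IsUnit.of_mul_eq_one (u : M) hcu)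

/-- If one factorization of `x` is contained in another (as multisets),
they coincide. -/
lemma factorizationsOf_eq_of_le {M : Type*} [CancelCommMonoid M] {x : M}
    {z z' : Multiset (Associates M)} (hz : z ∈ FactorizationsOf x)
    (hz' : z' ∈ FactorizationsOf x) (h : z ≤ z') : z = z' := by
  obtain ⟨t, rfl⟩ := Multiset.le_iff_exists_add.mp h
  have hprod : Associates.mk x * t.prod = Associates.mk x := by
    rw [← hz.2, ← Multiset.prod_add, hz'.2]
    exact hz.2.symm
  have ht1 : t.prod = 1 := assoc_mk_mul_cancel hprod
  have ht0 : t = 0 := by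
    apply Multiset.eq_zero_of_forall_notMem
    intro a ha
    have haunit : IsUnit a := isUnit_of_dvd_one (ht1 ▸ Multiset.dvd_prod ha)
    exact (hz'.1 a (Multiset.mem_add.mpr (Or.inr ha))).not_isUnit haunit
  rw [ht0, add_zero]

/-- A power of a non-unit is a non-unit. -/
lemma not_isUnit_pow {M : Type*} [Monoid M] {x : M} (hx : ¬IsUnit x) {n : ℕ}
    (hn : n ≠ 0) : ¬IsUnit (x ^ n) := fun h => hx ((isUnit_pow_iff hn).mp h)

/-- Collinearity: in a length-factorial monoid, three factorizations of `x`
with lengths `ℓ₁ < ℓ₂ < ℓ₃` satisfy `(ℓ₃-ℓ₂) • z₁ + (ℓ₂-ℓ₁) • z₃ = (ℓ₃-ℓ₁) • z₂`. -/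
lemma lfm_collinear {M : Type*} [CancelCommMonoid M]
    (hlf : ∀ x : M, ¬IsUnit x → ∀ z₁ z₂ : Multiset (Associates M),
      z₁ ∈ FactorizationsOf x → z₂ ∈ FactorizationsOf x →
        Multiset.card z₁ = Multiset.card z₂ → z₁ = z₂)
    {x : M} (hx : ¬IsUnit x) {z₁ z₂ z₃ : Multiset (Associates M)}
    (h₁ : z₁ ∈ FactorizationsOf x) (h₂ : z₂ ∈ FactorizationsOf x)
    (h₃ : z₃ ∈ FactorizationsOf x) {d₁ d₂ : ℕ} (hd₁ : 0 < d₁) (hd₂ : 0 < d₂)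
    (hc₂ : Multiset.card z₂ = Multiset.card z₁ + d₁)
    (hc₃ : Multiset.card z₃ = Multiset.card z₂ + d₂) :
    d₂ • z₁ + d₁ • z₃ = (d₁ + d₂) • z₂ := by
  set N := d₁ + d₂ with hN
  have hNne : N ≠ 0 := by omega
  have hxN : ¬IsUnit (x ^ N) := not_isUnit_pow hx hNne
  have hmemL : d₂ • z₁ + d₁ • z₃ ∈ FactorizationsOf (x ^ N) := by
    constructor
    · intro a ha
      rcases Multiset.mem_add.mp ha with h | h
      · exact h₁.1 a (Multiset.mem_nsmul.mp h).2
      · exact h₃.1 a (Multiset.mem_nsmul.mp h).2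
    · rw [Multiset.prod_add, Multiset.prod_nsmul, Multiset.prod_nsmul, h₁.2, h₃.2,
        ← pow_add, Associates.mk_pow, hN, Nat.add_comm d₁ d₂]
  have hmemR : (d₁ + d₂) • z₂ ∈ FactorizationsOf (x ^ N) := by
    constructor
    · intro a ha
      exact h₂.1 a (Multiset.mem_nsmul.mp ha).2
    · rw [Multiset.prod_nsmul, h₂.2, Associates.mk_pow]
  have hcard : Multiset.card (d₂ • z₁ + d₁ • z₃) = Multiset.card ((d₁ + d₂) • z₂) := by
    rw [Multiset.card_add, Multiset.card_nsmul, Multiset.card_nsmul, Multiset.card_nsmul,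
      hc₃, hc₂]
    ring
  exact hlf (x ^ N) hxN _ _ hmemL hmemR hcard

/-- Every length-factorial (cancellative commutative) monoid is a finite
factorization monoid: if `M` is atomic and no non-unit of `M` admits two
distinct factorizations into atoms of the same length, then every non-unit of
`M` has only finitely many factorizations (up to associates and reordering). -/
theorem lfm_is_ffm {M : Type*} [CancelCommMonoid M]
    (hatomic : ∀ x : M, ¬IsUnit x →
      ∃ z : Multiset M, (∀ a ∈ z, Irreducible a) ∧ z.prod = x)
    (hlf : ∀ x : M, ¬IsUnit x → ∀ z₁ z₂ : Multiset (Associates M),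
      z₁ ∈ FactorizationsOf x → z₂ ∈ FactorizationsOf x →
        Multiset.card z₁ = Multiset.card z₂ → z₁ = z₂) :
    ∀ x : M, ¬IsUnit x → (FactorizationsOf x).Finite := by
  intro x hx
  classical
  -- the length map is injective on factorizations
  have hinj : Set.InjOn Multiset.card (FactorizationsOf x) :=
    fun z hz z' hz' h => hlf x hx z z' hz hz' h
  -- it suffices to bound the lengths
  suffices hbd : ∃ B : ℕ, ∀ z ∈ FactorizationsOf x, Multiset.card z ≤ B by
    obtain ⟨B, hB⟩ := hbd
    refine Set.Finite.of_finite_image ((Set.finite_Iic B).subset ?_) hinj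
    rintro n ⟨z, hz, rfl⟩
    exact hB z hz
  by_cases hsub : ∀ z ∈ FactorizationsOf x, ∀ z' ∈ FactorizationsOf x, z = z'
  · -- at most one factorization
    by_cases hne : ∃ z, z ∈ FactorizationsOf x
    · obtain ⟨z₀, hz₀⟩ := hne
      exact ⟨Multiset.card z₀, fun z hz => le_of_eq (by rw [hsub z hz z₀ hz₀])⟩
    · exact ⟨0, fun z hz => absurd ⟨z, hz⟩ hne⟩
  · push_neg at hsub
    obtain ⟨w, hw, w', hw', hne⟩ := hsub
    -- the two cards differ; order them
    have hcardne : Multiset.card w ≠ Multiset.card w' :=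
      fun h => hne (hlf x hx w w' hw hw' h)
    -- wlog: z₁ has smaller card than z₂
    obtain ⟨z₁, z₂, h₁, h₂, hlt⟩ :
        ∃ z₁ z₂, z₁ ∈ FactorizationsOf x ∧ z₂ ∈ FactorizationsOf x ∧
          Multiset.card z₁ < Multiset.card z₂ := by
      rcases hcardne.lt_or_gt with h | h
      · exact ⟨w, w', hw, hw', h⟩
      · exact ⟨w', w, hw', hw, h⟩
    set d₁ := Multiset.card z₂ - Multiset.card z₁ with hd₁def
    have hd₁ : 0 < d₁ := by omega
    have hc₂ : Multiset.card z₂ = Multiset.card z₁ + d₁ := by omega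
    -- since z₁ ≠ z₂, z₁ is not ≤ z₂, so some atom a has bigger count in z₁
    have hnle : ¬ z₁ ≤ z₂ := by
      intro hle
      have heq := factorizationsOf_eq_of_le h₁ h₂ hle
      rw [heq] at hlt
      exact lt_irrefl _ hlt
    obtain ⟨a, ha⟩ : ∃ a, Multiset.count a z₂ < Multiset.count a z₁ := by
      by_contra hcon
      push_neg at hcon
      exact hnle (Multiset.le_iff_count.mpr fun a => le_of_not_gt (fun hlt' => hlt'.not_ge (hcon a)))
    -- the bound
    refine ⟨Multiset.card z₂ + d₁ * Multiset.count a z₁, ?_⟩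
    intro z hz
    by_cases hle : Multiset.card z ≤ Multiset.card z₂
    · omega
    · push_neg at hle
      set d₂ := Multiset.card z - Multiset.card z₂ with hd₂def
      have hd₂ : 0 < d₂ := by omega
      have hc₃ : Multiset.card z = Multiset.card z₂ + d₂ := by omega
      have hcol := lfm_collinear hlf hx h₁ h₂ hz hd₁ hd₂ hc₂ hc₃
      -- take counts at a
      have hcount := congrArg (Multiset.count a) hcol
      rw [Multiset.count_add, Multiset.count_nsmul, Multiset.count_nsmul,
        Multiset.count_nsmul] at hcount
      -- derive d₂ ≤ d₁ * count a z₁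
      set m₁ := Multiset.count a z₁
      set m₂ := Multiset.count a z₂
      set m₃ := Multiset.count a z
      have hkey : d₂ ≤ d₁ * m₁ := by
        have h2 : (d₁ + d₂) * (m₂ + 1) ≤ (d₁ + d₂) * m₁ :=
          Nat.mul_le_mul_left _ (Nat.succ_le_of_lt ha)
        have h3 : d₂ * m₁ + (d₁ * m₃ + d₁ + d₂) ≤ d₂ * m₁ + d₁ * m₁ := by
          calc d₂ * m₁ + (d₁ * m₃ + d₁ + d₂)
              = d₂ * m₁ + d₁ * m₃ + (d₁ + d₂) := by ring
            _ = (d₁ + d₂) * m₂ + (d₁ + d₂) := by rw [hcount]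
            _ = (d₁ + d₂) * (m₂ + 1) := by ring
            _ ≤ (d₁ + d₂) * m₁ := h2
            _ = d₂ * m₁ + d₁ * m₁ := by ring
        have h4 : d₁ * m₃ + d₁ + d₂ ≤ d₁ * m₁ := le_of_add_le_add_left h3
        calc d₂ ≤ d₁ * m₃ + d₁ + d₂ := Nat.le_add_left d₂ _
          _ ≤ d₁ * m₁ := h4
      rw [hc₃]
      exact Nat.add_le_add_left hkey _
end

section
/- Let M be a length-factorial cancellative commutative monoid that is reduced (its only unit is the identity), and let x be a non-unit of M admitting at least two factorizations into atoms. Let z1 and z2 be factorizations of x of the smallest and second-smallest possible lengths, respectively. Then every atom of M dividing x appears in z1 or in z2. -/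
/-!
If an atom `a ∣ x` lay in neither `z₁` nor `z₂`, a factorization `z` of `x` through `a` would have
length `n` with `|z₁| < |z₂| < n`. Then `x ^ (n - |z₁|)` has the two factorizations
`(|z₂| - |z₁|) • z + (n - |z₂|) • z₁` and `(n - |z₁|) • z₂` of the same length, which must coincide
in a length-factorial monoid, so `a ∈ z₂` after all.
-/

/-- `z` is a factorization of `x`: a multiset of atoms (irreducible elements)
whose product equals `x` (the monoid is reduced, so no associates are needed). -/
def IsFactorizationOf {M : Type*} [CancelCommMonoid M] (z : Multiset M) (x : M) : Prop :=
  (∀ a ∈ z, Irreducible a) ∧ z.prod = x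

namespace IsFactorizationOf

variable {M : Type*} [CancelCommMonoid M]

theorem zero : IsFactorizationOf (0 : Multiset M) 1 :=
  ⟨fun _ h => absurd h (Multiset.notMem_zero _), Multiset.prod_zero⟩

theorem add {z w : Multiset M} {x y : M} (hz : IsFactorizationOf z x)
    (hw : IsFactorizationOf w y) : IsFactorizationOf (z + w) (x * y) := by
  refine ⟨fun a ha => ?_, by rw [Multiset.prod_add, hz.2, hw.2]⟩
  rcases Multiset.mem_add.mp ha with ha | ha
  exacts [hz.1 a ha, hw.1 a ha]

theorem cons {z : Multiset M} {a x : M} (ha : Irreducible a) (hz : IsFactorizationOf z x) :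
    IsFactorizationOf (a ::ₘ z) (a * x) := by
  simpa only [Multiset.singleton_add] using
    add (z := {a}) ⟨fun b hb => Multiset.mem_singleton.mp hb ▸ ha, Multiset.prod_singleton a⟩ hz

theorem nsmul {z : Multiset M} {x : M} (hz : IsFactorizationOf z x) (k : ℕ) :
    IsFactorizationOf (k • z) (x ^ k) :=
  ⟨fun a ha => hz.1 a (Multiset.mem_of_mem_nsmul ha), by rw [Multiset.prod_nsmul, hz.2]⟩

end IsFactorizationOf

/-- The factorization part of being length-factorial (atomicity is a separate hypothesis). -/
def LengthDeterminesFactorization (M : Type*) [CancelCommMonoid M] : Prop :=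
  ∀ (y : M) (w₁ w₂ : Multiset M), IsFactorizationOf w₁ y → IsFactorizationOf w₂ y →
    Multiset.card w₁ = Multiset.card w₂ → w₁ = w₂

section

variable {M : Type*} [CancelCommMonoid M]

theorem exists_factorization_mem_of_dvd (hred : ∀ u : M, IsUnit u → u = 1)
    (hatomic : ∀ y : M, ¬IsUnit y → ∃ z : Multiset M, IsFactorizationOf z y)
    {a x : M} (ha : Irreducible a) (hdvd : a ∣ x) :
    ∃ z : Multiset M, IsFactorizationOf z x ∧ a ∈ z := by
  obtain ⟨y, rfl⟩ := hdvd
  obtain ⟨w, hw⟩ : ∃ w : Multiset M, IsFactorizationOf w y := by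
    by_cases hy : IsUnit y
    · exact ⟨0, hred y hy ▸ .zero⟩
    · exact hatomic y hy
  exact ⟨a ::ₘ w, hw.cons ha, Multiset.mem_cons_self a w⟩

theorem LengthDeterminesFactorization.nsmul_add_nsmul_eq_nsmul
    (hlf : LengthDeterminesFactorization M) {x : M} {z₁ z₂ z₃ : Multiset M}
    (hz₁ : IsFactorizationOf z₁ x) (hz₂ : IsFactorizationOf z₂ x) (hz₃ : IsFactorizationOf z₃ x)
    (h₁₂ : Multiset.card z₁ ≤ Multiset.card z₂) (h₂₃ : Multiset.card z₂ ≤ Multiset.card z₃) :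
    (Multiset.card z₂ - Multiset.card z₁) • z₃ + (Multiset.card z₃ - Multiset.card z₂) • z₁ =
      (Multiset.card z₃ - Multiset.card z₁) • z₂ := by
  set l₁ := Multiset.card z₁
  set l₂ := Multiset.card z₂
  set l₃ := Multiset.card z₃
  have hpow : x ^ (l₂ - l₁) * x ^ (l₃ - l₂) = x ^ (l₃ - l₁) := by
    rw [← pow_add]; congr 1; omega
  refine hlf _ _ _ (hpow ▸ (hz₃.nsmul _).add (hz₁.nsmul _)) (hz₂.nsmul _) ?_
  simp only [Multiset.card_add, Multiset.card_nsmul]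
  zify [h₁₂, h₂₃, h₁₂.trans h₂₃]
  ring

theorem LengthDeterminesFactorization.mem_of_card_lt_of_card_lt
    (hlf : LengthDeterminesFactorization M) {x : M} {z₁ z₂ z₃ : Multiset M}
    (hz₁ : IsFactorizationOf z₁ x) (hz₂ : IsFactorizationOf z₂ x) (hz₃ : IsFactorizationOf z₃ x)
    (h₁₂ : Multiset.card z₁ < Multiset.card z₂) (h₂₃ : Multiset.card z₂ < Multiset.card z₃)
    {a : M} (ha : a ∈ z₃) : a ∈ z₂ := by
  have heq := hlf.nsmul_add_nsmul_eq_nsmul hz₁ hz₂ hz₃ h₁₂.le h₂₃.le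
  have hmem : a ∈ (Multiset.card z₃ - Multiset.card z₁) • z₂ := by
    rw [← heq]
    exact Multiset.mem_add.mpr <| .inl <| (Multiset.mem_nsmul_of_ne_zero (by omega)).mpr ha
  exact Multiset.mem_of_mem_nsmul hmem

end

theorem atom_divisor_mem_min_factorizations_general {M : Type*} [CancelCommMonoid M]
    (hred : ∀ u : M, IsUnit u → u = 1)
    (hatomic : ∀ y : M, ¬IsUnit y → ∃ z : Multiset M, IsFactorizationOf z y)
    (hlf : ∀ (y : M) (w₁ w₂ : Multiset M), IsFactorizationOf w₁ y → IsFactorizationOf w₂ y →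
      Multiset.card w₁ = Multiset.card w₂ → w₁ = w₂)
    (x : M)
    (z₁ z₂ : Multiset M)
    (hz₁ : IsFactorizationOf z₁ x) (hz₂ : IsFactorizationOf z₂ x)
    -- `z₁` has the smallest possible length among factorizations of `x`:
    (hmin₁ : ∀ z : Multiset M, IsFactorizationOf z x → Multiset.card z₁ ≤ Multiset.card z)
    -- `z₂` has a different length from `z₁` (in particular `x` has at least two
    -- factorizations), and its length is the second-smallest possible one:
    (hne : Multiset.card z₂ ≠ Multiset.card z₁)
    (hmin₂ : ∀ z : Multiset M, IsFactorizationOf z x → Multiset.card z ≠ Multiset.card z₁ →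
      Multiset.card z₂ ≤ Multiset.card z) :
    ∀ a : M, Irreducible a → a ∣ x → a ∈ z₁ ∨ a ∈ z₂ := by
  intro a ha hdvd
  obtain ⟨z, hz, haz⟩ := exists_factorization_mem_of_dvd hred hatomic ha hdvd
  by_contra! ⟨ha₁, ha₂⟩
  have hne₁ : Multiset.card z ≠ Multiset.card z₁ := fun h => ha₁ (hlf x z z₁ hz hz₁ h ▸ haz)
  have hne₂ : Multiset.card z ≠ Multiset.card z₂ := fun h => ha₂ (hlf x z z₂ hz hz₂ h ▸ haz)
  have h₁₂ := (hmin₁ z₂ hz₂).lt_of_ne hne.symm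
  have h₂₃ := (hmin₂ z hz hne₁).lt_of_ne hne₂.symm
  have hlf' : LengthDeterminesFactorization M := hlf
  exact ha₂ (hlf'.mem_of_card_lt_of_card_lt hz₁ hz₂ hz h₁₂ h₂₃ haz)

/-- Let `M` be a reduced length-factorial cancellative commutative monoid and let `x` be a
non-unit of `M` admitting at least two factorizations into atoms.  If `z₁` is a
factorization of `x` of smallest length and `z₂` is a factorization of `x` of
second-smallest length, then every atom of `M` dividing `x` appears in `z₁` or in `z₂`. -/
theorem atom_divisor_mem_min_factorizations {M : Type*} [CancelCommMonoid M]
    (hred : ∀ u : M, IsUnit u → u = 1)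
    (hatomic : ∀ y : M, ¬IsUnit y → ∃ z : Multiset M, IsFactorizationOf z y)
    (hlf : ∀ (y : M) (w₁ w₂ : Multiset M), IsFactorizationOf w₁ y → IsFactorizationOf w₂ y →
      Multiset.card w₁ = Multiset.card w₂ → w₁ = w₂)
    (x : M) (hx : ¬IsUnit x)
    (z₁ z₂ : Multiset M)
    (hz₁ : IsFactorizationOf z₁ x) (hz₂ : IsFactorizationOf z₂ x)
    -- `z₁` has the smallest possible length among factorizations of `x`:
    (hmin₁ : ∀ z : Multiset M, IsFactorizationOf z x → Multiset.card z₁ ≤ Multiset.card z)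
    -- `z₂` has a different length from `z₁` (in particular `x` has at least two
    -- factorizations), and its length is the second-smallest possible one:
    (hne : Multiset.card z₂ ≠ Multiset.card z₁)
    (hmin₂ : ∀ z : Multiset M, IsFactorizationOf z x → Multiset.card z ≠ Multiset.card z₁ →
      Multiset.card z₂ ≤ Multiset.card z) :
    ∀ a : M, Irreducible a → a ∣ x → a ∈ z₁ ∨ a ∈ z₂ :=
  atom_divisor_mem_min_factorizations_general hred hatomic hlf x z₁ z₂ hz₁ hz₂ hmin₁ hne hmin₂
end

section
/- For a cancellative commutative monoid M (written additively), every submonoid of M is a length-factorial monoid if and only if M is a torsion abelian group, i.e., every element of M is invertible and has finite order. -/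
section Defs

variable {M : Type*} [AddCommMonoid M]

/-- Two elements of an additive monoid are associates if they differ by an
invertible element. -/
def AddAssociated (x y : M) : Prop := ∃ u : M, IsAddUnit u ∧ x + u = y

/-- `a` is an atom (irreducible element) of the additive monoid `M`. -/
def IsAddAtom (a : M) : Prop :=
  ¬IsAddUnit a ∧ ∀ x y : M, a = x + y → IsAddUnit x ∨ IsAddUnit y

/-- `M` is atomic: every non-invertible element of `M` is a sum of atoms. -/
def IsAddAtomic (M : Type*) [AddCommMonoid M] : Prop :=
  ∀ x : M, ¬IsAddUnit x → ∃ z : Multiset M, (∀ a ∈ z, IsAddAtom a) ∧ z.sum = x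

/-- `M` is a length-factorial monoid: it is atomic and any two factorizations
(multisets of atoms combining to the same element up to an invertible element)
of the same length coincide up to associates and reordering. -/
def IsLFM (M : Type*) [AddCommMonoid M] : Prop :=
  IsAddAtomic M ∧
    ∀ z₁ z₂ : Multiset M, (∀ a ∈ z₁, IsAddAtom a) → (∀ a ∈ z₂, IsAddAtom a) →
      ¬IsAddUnit z₁.sum → AddAssociated z₁.sum z₂.sum →
        Multiset.card z₁ = Multiset.card z₂ → Multiset.Rel AddAssociated z₁ z₂

end Defs

/-- For a cancellative commutative monoid `M` (written additively), every submonoid of `M`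
is a length-factorial monoid if and only if `M` is a torsion abelian group, i.e. every
element of `M` is invertible and has finite order. -/
theorem hereditarily_lfm_iff_torsion_group {M : Type*} [AddCancelCommMonoid M] :
    (∀ N : AddSubmonoid M, IsLFM ↥N) ↔
      (∀ x : M, IsAddUnit x ∧ ∃ n : ℕ, 0 < n ∧ n • x = 0) := by
  constructor
  · intro h x
    by_cases hinj : ∀ m n : ℕ, m • x = n • x → m = n
    · -- injective case: derive a contradiction using the submonoid ⟨3x,4x,5x⟩
      exfalso
      set N : AddSubmonoid M :=
        { carrier := {y | ∃ k : ℕ, (k = 0 ∨ 3 ≤ k) ∧ y = k • x}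
          zero_mem' := ⟨0, Or.inl rfl, (zero_nsmul x).symm⟩
          add_mem' := by
            rintro a b ⟨k, hk, rfl⟩ ⟨l, hl, rfl⟩
            exact ⟨k + l, by omega, (add_nsmul x k l).symm⟩ } with hNdef
      have hmemN : ∀ k : ℕ, (k = 0 ∨ 3 ≤ k) → (k • x) ∈ N := fun k hk => ⟨k, hk, rfl⟩
      have hunit : ∀ u : N, IsAddUnit u → (u : M) = 0 := by
        intro u hu
        obtain ⟨v, hv⟩ := hu.exists_neg
        obtain ⟨k, hk, hku⟩ := u.2
        obtain ⟨l, hl, hlv⟩ := v.2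
        have hval : (u : M) + (v : M) = 0 := by
          have := congrArg (Subtype.val) hv
          simpa using this
        rw [hku, hlv, ← add_nsmul] at hval
        have h0 : (k + l) • x = 0 • x := by rw [hval, zero_nsmul]
        have := hinj _ _ h0
        have hk0 : k = 0 := by omega
        rw [hku, hk0, zero_nsmul]
      have hne : ∀ m n : ℕ, m ≠ n → (m • x : M) ≠ n • x := fun m n hmn h' => hmn (hinj _ _ h')
      have hatom : ∀ (k : ℕ) (h3 : 3 ≤ k), k ≤ 5 →
          IsAddAtom (⟨k • x, hmemN k (Or.inr h3)⟩ : N) := by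
        intro k h3 h5
        constructor
        · intro hu
          have := hunit _ hu
          simp only at this
          have : k • x = 0 • x := by rw [this, zero_nsmul]
          have := hinj _ _ this
          omega
        · rintro a b hab
          obtain ⟨p, hp, hpa⟩ := a.2
          obtain ⟨q, hq, hqb⟩ := b.2
          have hval : (k • x : M) = (a : M) + (b : M) := congrArg Subtype.val hab
          rw [hpa, hqb, ← add_nsmul] at hval
          have hpq : k = p + q := hinj _ _ hval
          have : p = 0 ∨ q = 0 := by omega
          rcases this with h0 | h0
          · left
            have : a = (0 : N) := Subtype.ext (by rw [hpa, h0, zero_nsmul]; rfl)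
            rw [this]; exact isAddUnit_zero
          · right
            have : b = (0 : N) := Subtype.ext (by rw [hqb, h0, zero_nsmul]; rfl)
            rw [this]; exact isAddUnit_zero
      set e3 : N := ⟨3 • x, hmemN 3 (Or.inr le_rfl)⟩ with he3
      set e4 : N := ⟨4 • x, hmemN 4 (Or.inr (by omega))⟩ with he4
      set e5 : N := ⟨5 • x, hmemN 5 (Or.inr (by omega))⟩ with he5
      obtain ⟨-, hLF⟩ := h N
      have hsum : ({e3, e5} : Multiset N).sum = ({e4, e4} : Multiset N).sum := by
        apply Subtype.ext
        show (e3 : M) + ((e5 : M) + 0) = (e4 : M) + ((e4 : M) + 0)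
        simp only [he3, he4, he5, add_zero, ← add_nsmul]
      have hrel : Multiset.Rel AddAssociated ({e3, e5} : Multiset N) ({e4, e4} : Multiset N) := by
        apply hLF
        · intro a ha
          simp only [Multiset.insert_eq_cons, Multiset.mem_cons, Multiset.mem_singleton] at ha
          rcases ha with rfl | rfl
          · exact hatom 3 le_rfl (by omega)
          · exact hatom 5 (by omega) le_rfl
        · intro a ha
          simp only [Multiset.insert_eq_cons, Multiset.mem_cons, Multiset.mem_singleton] at ha
          rcases ha with rfl | rfl <;> exact hatom 4 (by omega) (by omega)
        · intro hu
          have := hunit _ hu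
          have h8 : (({e3, e5} : Multiset N).sum : M) = 8 • x := by
            show (e3 : M) + ((e5 : M) + 0) = 8 • x
            simp only [he3, he5, add_zero, ← add_nsmul]
          rw [h8] at this
          have : (8 : ℕ) • x = 0 • x := by rw [this, zero_nsmul]
          have := hinj _ _ this
          omega
        · exact ⟨0, isAddUnit_zero, by rw [add_zero, hsum]⟩
        · rfl
      rw [Multiset.insert_eq_cons, Multiset.rel_cons_left] at hrel
      obtain ⟨b, bs, hab, -, hb⟩ := hrel
      have hbmem : b ∈ ({e4, e4} : Multiset N) := by rw [hb]; exact Multiset.mem_cons_self _ _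
      have hb4 : b = e4 := by
        simp only [Multiset.insert_eq_cons, Multiset.mem_cons, Multiset.mem_singleton] at hbmem
        tauto
      obtain ⟨u, hu, huv⟩ := hab
      have hu0 : (u : M) = 0 := hunit u hu
      have : (3 : ℕ) • x = 4 • x := by
        have := congrArg Subtype.val huv
        rw [hb4] at this
        simpa [he3, he4, hu0] using this
      exact hne 3 4 (by omega) this
    · -- non-injective case: x is a torsion unit
      push_neg at hinj
      obtain ⟨m, n, hmn, hne⟩ := hinj
      have key : ∃ d : ℕ, 0 < d ∧ d • x = 0 := by
        rcases Nat.lt_or_ge m n with hlt | hge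
        · refine ⟨n - m, by omega, ?_⟩
          apply add_left_cancel (a := m • x)
          rw [← add_nsmul, add_zero]
          rw [show m + (n - m) = n by omega, hmn]
        · have hlt : n < m := by omega
          refine ⟨m - n, by omega, ?_⟩
          apply add_left_cancel (a := n • x)
          rw [← add_nsmul, add_zero]
          rw [show n + (m - n) = m by omega, hmn]
      obtain ⟨d, hd, hdx⟩ := key
      refine ⟨?_, d, hd, hdx⟩
      have hadd : x + (d - 1) • x = 0 := by
        have h' : (1 + (d - 1)) • x = 0 := by rw [show 1 + (d - 1) = d by omega, hdx]
        rwa [add_nsmul, one_nsmul] at h'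
      exact IsAddUnit.of_add_eq_zero _ hadd
  · intro h N
    have hall : ∀ y : N, IsAddUnit y := by
      intro y
      obtain ⟨-, n, hn, hnx⟩ := h (y : M)
      have h0 : (n • y : N) = 0 := Subtype.ext (by simpa using hnx)
      have hadd : y + (n - 1) • y = 0 := by
        have h' : (1 + (n - 1)) • y = 0 := by rw [show 1 + (n - 1) = n by omega, h0]
        rwa [add_nsmul, one_nsmul] at h'
      exact IsAddUnit.of_add_eq_zero _ hadd
    constructor
    · intro y hy
      exact absurd (hall y) hy
    · intro z₁ z₂ _ _ hns _ _
      exact absurd (hall _) hns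
end

section
/- Let F be a field, let a and b be integers with 2 ≤ a < b and gcd(a, b) = 1, and let M = ⟨a, b⟩ be the additive submonoid of the nonnegative integers generated by a and b. Let p be the minimal positive integer such that b divides pa − 1, and let Q = (pa − 1)/b. Then the element x^{pa} − x^{Qb} is irreducible in the monoid algebra F[x; M] (equivalently, in the subring F[x^a, x^b] of F[x]). -/
open Polynomial

private lemma nt_key (a b p Q : ℕ) (ha : 2 ≤ a) (hab : a < b) (hgcd : Nat.gcd a b = 1)
    (hp : 0 < p) (hpQ : p * a = Q * b + 1)
    (hpmin : ∀ p' : ℕ, 0 < p' → (∃ Q' : ℕ, p' * a = Q' * b + 1) → p ≤ p')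
    (i j : ℕ) (hi : ∃ u v, i = u * a + v * b) (hi1 : ∃ u v, i + 1 = u * a + v * b)
    (hj : ∃ u v, j = u * a + v * b) (hj1 : 1 ≤ j) (hij : i + j = Q * b) : False := by
  -- first, p < b
  have hpb : p < b := by
    by_contra hle
    push_neg at hle
    have hQa : a ≤ Q := by nlinarith
    have h1 : (p - b) * a = (Q - a) * b + 1 := by
      zify [hle, hQa]
      linarith
    have hppos : 0 < p - b := by
      rcases Nat.eq_zero_or_pos (p - b) with h0 | h
      · rw [h0] at h1; simp at h1
      · exact h
    have := hpmin (p - b) hppos ⟨Q - a, h1⟩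
    omega
  obtain ⟨s, t, hst⟩ := hi
  obtain ⟨u1, v1, h1⟩ := hi1
  obtain ⟨u2, v2, h2⟩ := hj
  have hsum : (u1 + u2) * a + (v1 + v2) * b = p * a := by nlinarith
  -- show v1 + v2 = 0
  have hVb : (v1 + v2) * b = p * a - (u1 + u2) * a := by
    rw [← hsum, Nat.add_sub_cancel_left]
  have hdvd : a ∣ (v1 + v2) * b := by
    rw [hVb]
    exact Nat.dvd_sub (dvd_mul_left a p) (dvd_mul_left a (u1 + u2))
  have hdvdV : a ∣ (v1 + v2) := (Nat.Coprime.dvd_of_dvd_mul_right hgcd hdvd)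
  have hV0 : v1 + v2 = 0 := by
    by_contra hne
    have hge : a ≤ v1 + v2 := Nat.le_of_dvd (Nat.pos_of_ne_zero hne) hdvdV
    have : a * b ≤ (v1 + v2) * b := Nat.mul_le_mul_right b hge
    have hpa : p * a < a * b := by
      calc p * a ≤ (b - 1) * a := Nat.mul_le_mul_right a (by omega)
        _ < a * b := by
          rw [Nat.sub_mul, mul_comm b a]
          have : 0 < a * b := Nat.mul_pos (by omega) (by omega)
          omega
    omega
  have hv1 : v1 = 0 := by omega
  have hv2 : v2 = 0 := by omega
  subst hv1 hv2
  simp only [Nat.zero_mul, Nat.add_zero] at h1 h2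
  have hu12 : u1 + u2 = p := by
    have : (u1 + u2) * a = p * a := by omega
    exact Nat.eq_of_mul_eq_mul_right (by omega) this
  have hu2 : 1 ≤ u2 := by
    rcases Nat.eq_zero_or_pos u2 with h0 | h
    · rw [h0] at h2; simp at h2; omega
    · exact h
  have hu1 : 1 ≤ u1 := by
    rcases Nat.eq_zero_or_pos u1 with h0 | h
    · rw [h0] at h1; simp at h1
    · exact h
  -- u1 * a = s * a + t * b + 1
  have heq : u1 * a = s * a + t * b + 1 := by omega
  have hs : s < u1 := by
    by_contra hle
    push_neg at hle
    have : u1 * a ≤ s * a := Nat.mul_le_mul_right a hle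
    omega
  have h3 : (u1 - s) * a = t * b + 1 := by
    rw [Nat.sub_mul]
    omega
  have := hpmin (u1 - s) (by omega) ⟨t, h3⟩
  omega

private lemma support_in_monoid {F : Type*} [Field F] (a b : ℕ) {z : F[X]}
    (hz : z ∈ Algebra.adjoin F ({X ^ a, X ^ b} : Set F[X])) :
    ∀ n, z.coeff n ≠ 0 → ∃ u v, n = u * a + v * b := by
  induction hz using Algebra.adjoin_induction with
  | mem x hx =>
    intro n hn
    rcases hx with rfl | rfl
    · rw [coeff_X_pow] at hn
      refine ⟨1, 0, ?_⟩
      by_cases h : n = a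
      · omega
      · simp [h] at hn
    · rw [coeff_X_pow] at hn
      refine ⟨0, 1, ?_⟩
      by_cases h : n = b
      · omega
      · simp [h] at hn
  | algebraMap r =>
    intro n hn
    have : n = 0 := by
      by_contra h
      rw [Polynomial.algebraMap_eq, coeff_C, if_neg h] at hn
      exact hn rfl
    exact ⟨0, 0, by omega⟩
  | add x y hx hy ihx ihy =>
    intro n hn
    rw [coeff_add] at hn
    by_cases h : x.coeff n = 0
    · exact ihy n (by rw [h, zero_add] at hn; exact hn)
    · exact ihx n h
  | mul x y hx hy ihx ihy =>
    intro n hn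
    rw [coeff_mul] at hn
    obtain ⟨⟨n1, n2⟩, hmem, hne⟩ := Finset.exists_ne_zero_of_sum_ne_zero hn
    have hadd : n1 + n2 = n := Finset.HasAntidiagonal.mem_antidiagonal.mp hmem
    have hx1 : x.coeff n1 ≠ 0 := fun h0 => hne (by rw [h0, zero_mul])
    have hy2 : y.coeff n2 ≠ 0 := fun h0 => hne (by rw [h0, mul_zero])
    obtain ⟨u1, v1, h1⟩ := ihx n1 hx1
    obtain ⟨u2, v2, h2⟩ := ihy n2 hy2
    exact ⟨u1 + u2, v1 + v2, by rw [← hadd, h1, h2]; ring⟩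

private lemma isUnit_lift {F : Type*} [Field F] {S : Subalgebra F F[X]} {z : S}
    (h : IsUnit (z : F[X])) : IsUnit z := by
  obtain ⟨c, hc, hcz⟩ := Polynomial.isUnit_iff.mp h
  have hc0 : c ≠ 0 := hc.ne_zero
  have hmem : (C c⁻¹ : F[X]) ∈ S := by
    have : (C c⁻¹ : F[X]) = algebraMap F F[X] c⁻¹ := rfl
    rw [this]
    exact S.algebraMap_mem c⁻¹
  refine IsUnit.of_mul_eq_one (a := z) ⟨C c⁻¹, hmem⟩ ?_
  ext
  push_cast
  rw [← hcz, ← C_mul, mul_inv_cancel₀ hc0, C_1]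

/-- Let `F` be a field, let `a, b` be integers with `2 ≤ a < b` and `gcd(a, b) = 1`.
Let `p` be the minimal positive integer such that `b ∣ p * a - 1` and write
`p * a = Q * b + 1`.  Then the element `x ^ (p * a) - x ^ (Q * b)` is irreducible in
the monoid algebra `F[x; ⟨a, b⟩]`, realized as the subring `F[x ^ a, x ^ b]` of the
polynomial ring `F[x]` (the `F`-subalgebra generated by `x ^ a` and `x ^ b`). -/
theorem binomial_irreducible_in_numerical_monoid_algebra {F : Type*} [Field F]
    (a b : ℕ) (ha : 2 ≤ a) (hab : a < b) (hgcd : Nat.gcd a b = 1)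
    (p Q : ℕ) (hp : 0 < p) (hpQ : p * a = Q * b + 1)
    (hpmin : ∀ p' : ℕ, 0 < p' → (∃ Q' : ℕ, p' * a = Q' * b + 1) → p ≤ p') :
    ∃ y : ↥(Algebra.adjoin F ({Polynomial.X ^ a, Polynomial.X ^ b} : Set (Polynomial F))),
      (y : Polynomial F) = Polynomial.X ^ (p * a) - Polynomial.X ^ (Q * b) ∧
        Irreducible y := by
  set R := Algebra.adjoin F ({X ^ a, X ^ b} : Set F[X]) with hR
  set f : F[X] := X ^ (p * a) - X ^ (Q * b) with hfdef
  have hfmem : f ∈ R := by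
    apply sub_mem
    · have : (X : F[X]) ^ (p * a) = (X ^ a) ^ p := by rw [← pow_mul, mul_comm]
      rw [this]
      exact pow_mem (Algebra.subset_adjoin (by simp)) p
    · have : (X : F[X]) ^ (Q * b) = (X ^ b) ^ Q := by rw [← pow_mul, mul_comm]
      rw [this]
      exact pow_mem (Algebra.subset_adjoin (by simp)) Q
  have hfactor : f = X ^ (Q * b) * (X - C 1) := by
    rw [hfdef, mul_sub, ← pow_succ, hpQ, map_one, mul_one]
  have hX1ne : (X - C 1 : F[X]) ≠ 0 := X_sub_C_ne_zero 1
  have hXpow_ne : (X ^ (Q * b) : F[X]) ≠ 0 := pow_ne_zero _ X_ne_zero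
  have hfne : f ≠ 0 := by rw [hfactor]; exact mul_ne_zero hXpow_ne hX1ne
  have hdeg : f.natDegree = Q * b + 1 := by
    rw [hfactor, natDegree_mul hXpow_ne hX1ne, natDegree_X_pow, natDegree_X_sub_C]
  have htr : f.natTrailingDegree = Q * b := by
    rw [hfactor, natTrailingDegree_mul hXpow_ne hX1ne, natTrailingDegree_X_pow]
    have : (X - C 1 : F[X]).natTrailingDegree = 0 := by
      rw [natTrailingDegree_eq_zero]
      right
      simp
    omega
  refine ⟨⟨f, hfmem⟩, rfl, ?_, ?_⟩
  · -- not a unit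
    intro hu
    have : IsUnit f := hu.map R.val
    have := natDegree_eq_zero_of_isUnit this
    omega
  · intro g h hy
    have hcoe : f = (g : F[X]) * (h : F[X]) := by
      have := congrArg (Subtype.val) hy
      push_cast at this
      exact this
    have hGne : (g : F[X]) ≠ 0 := fun h0 => hfne (by rw [hcoe, h0, zero_mul])
    have hHne : (h : F[X]) ≠ 0 := fun h0 => hfne (by rw [hcoe, h0, mul_zero])
    have hdsum : (g : F[X]).natDegree + (h : F[X]).natDegree = Q * b + 1 := by
      rw [← hdeg, hcoe, natDegree_mul hGne hHne]
    have htsum : (g : F[X]).natTrailingDegree + (h : F[X]).natTrailingDegree = Q * b := by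
      rw [← htr, hcoe, natTrailingDegree_mul hGne hHne]
    have hgle := natTrailingDegree_le_natDegree (g : F[X])
    have hhle := natTrailingDegree_le_natDegree (h : F[X])
    -- helper to finish a case
    have key : ∀ g' h' : R, (g' : F[X]) ≠ 0 → (h' : F[X]) ≠ 0 →
        (g' : F[X]).natDegree = (g' : F[X]).natTrailingDegree + 1 →
        (h' : F[X]).natDegree = (h' : F[X]).natTrailingDegree →
        (g' : F[X]).natTrailingDegree + (h' : F[X]).natTrailingDegree = Q * b →
        IsUnit h' := by
      intro g' h' hg0 hh0 hdg hdh hts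
      apply isUnit_lift
      have hh_deg : (h' : F[X]).natDegree = 0 := by
        by_contra hne0
        have htH : 1 ≤ (h' : F[X]).natTrailingDegree := by omega
        refine nt_key a b p Q ha hab hgcd hp hpQ hpmin
          ((g' : F[X]).natTrailingDegree) ((h' : F[X]).natTrailingDegree)
          ?_ ?_ ?_ htH hts
        · exact support_in_monoid a b g'.2 _ (trailingCoeff_nonzero_iff_nonzero.mpr hg0)
        · have := support_in_monoid a b g'.2 ((g' : F[X]).natDegree)
            (fun hc => (leadingCoeff_ne_zero.mpr hg0) hc)
          rwa [hdg] at this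
        · exact support_in_monoid a b h'.2 _ (trailingCoeff_nonzero_iff_nonzero.mpr hh0)
      obtain ⟨c, hc⟩ := Polynomial.natDegree_eq_zero.mp hh_deg
      have hc0 : c ≠ 0 := fun h0 => hh0 (by rw [← hc, h0, map_zero])
      rw [← hc]
      exact (Polynomial.isUnit_C).mpr (isUnit_iff_ne_zero.mpr hc0)
    rcases (by omega :
        ((g : F[X]).natDegree = (g : F[X]).natTrailingDegree + 1 ∧
          (h : F[X]).natDegree = (h : F[X]).natTrailingDegree) ∨
        ((h : F[X]).natDegree = (h : F[X]).natTrailingDegree + 1 ∧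
          (g : F[X]).natDegree = (g : F[X]).natTrailingDegree)) with ⟨h1, h2⟩ | ⟨h1, h2⟩
    · exact Or.inr (key g h hGne hHne h1 h2 htsum)
    · exact Or.inl (key h g hHne hGne h1 h2 (by omega))
end

section
/- Let S be a positive semidomain, i.e., a subsemiring of the real numbers all of whose elements are nonnegative. If a is an atom of the additive monoid (S, +) and b ∈ S divides a multiplicatively (a = b·c for some c ∈ S), then b is an atom of the additive monoid (S, +). In other words, the set of additive atoms of S is closed under multiplicative divisors. -/
/-! Multiplying a decomposition `b = x + y` on the right by `c` gives the decomposition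
`b * c = x * c + y * c` inside `S`; as there are no zero divisors and `c ≠ 0`, one of the
summands `x`, `y` must vanish. -/

/-- Additive atoms of `S`, when `0` is the only additive unit of `S` (as in a positive semidomain). -/
def IsAddAtomIn {R : Type*} [Semiring R] (S : Subsemiring R) (a : R) : Prop :=
  a ≠ 0 ∧ ∀ x ∈ S, ∀ y ∈ S, a = x + y → x = 0 ∨ y = 0

theorem IsAddAtomIn.of_mul_right {R : Type*} [Semiring R] [NoZeroDivisors R]
    {S : Subsemiring R} {b c : R} (hc : c ∈ S) (h : IsAddAtomIn S (b * c)) :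
    IsAddAtomIn S b := by
  obtain ⟨hbc, hsplit⟩ := h
  have hc0 : c ≠ 0 := right_ne_zero_of_mul hbc
  refine ⟨left_ne_zero_of_mul hbc, fun x hx y hy hxy => ?_⟩
  have hsum : b * c = x * c + y * c := by rw [hxy, add_mul]
  rcases hsplit _ (S.mul_mem hx hc) _ (S.mul_mem hy hc) hsum with h | h
  · exact Or.inl ((mul_eq_zero.1 h).resolve_right hc0)
  · exact Or.inr ((mul_eq_zero.1 h).resolve_right hc0)

theorem additive_atoms_divisor_closed_general (S : Subsemiring ℝ)
    (a b c : ℝ) (hc : c ∈ S)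
    (hatom : a ≠ 0 ∧ ∀ x ∈ S, ∀ y ∈ S, a = x + y → x = 0 ∨ y = 0)
    (hdiv : a = b * c) :
    b ≠ 0 ∧ ∀ x ∈ S, ∀ y ∈ S, b = x + y → x = 0 ∨ y = 0 :=
  IsAddAtomIn.of_mul_right hc (hdiv ▸ hatom)

/-- In a positive semidomain (a subsemiring of `ℝ` all of whose elements are
nonnegative), any multiplicative divisor of an additive atom is again an additive
atom: the set of additive atoms is multiplicatively divisor-closed. -/
theorem additive_atoms_divisor_closed (S : Subsemiring ℝ) (hS : ∀ x ∈ S, (0 : ℝ) ≤ x)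
    (a b c : ℝ) (ha : a ∈ S) (hb : b ∈ S) (hc : c ∈ S)
    (hatom : a ≠ 0 ∧ ∀ x ∈ S, ∀ y ∈ S, a = x + y → x = 0 ∨ y = 0)
    (hdiv : a = b * c) :
    b ≠ 0 ∧ ∀ x ∈ S, ∀ y ∈ S, b = x + y → x = 0 ∨ y = 0 :=
  additive_atoms_divisor_closed_general S a b c hc hatom hdiv
end

section
/- The multiplicative monoid of nonzero polynomials with natural number coefficients is not length-factorial. Specifically, in the semiring ℕ[X] of polynomials over the natural numbers: the polynomials X + 1, X + 2, X^3 + 2X + 3, and X^3 + X^2 + X + 6 are all irreducible in the multiplicative monoid of nonzero elements of ℕ[X], they are pairwise non-associate, and (X + 1)·(X^3 + X^2 + X + 6) = (X + 2)·(X^3 + 2X + 3), so this element admits two distinct factorizations into irreducibles of the same length 2. -/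
/-!
A reducible monic cubic in `ℕ[X]` splits off a factor `X + b` with `b ∈ ℕ`. Since coefficients in
`ℕ` cannot cancel, comparing coefficients rules this out for `X³ + 2X + 3` and `X³ + X² + X + 6`,
although over `ℤ` both are divisible by `X + 1`. Their products with `X + 2` and `X + 1` agree,
giving two different factorizations of length `2`.
-/

open Polynomial

/-- The multiplicative monoid of nonzero elements of `ℕ[X]` is length-factorial:
it is atomic and no two distinct factorizations into irreducibles of the same
element have the same length.  (In `ℕ[X]` the only unit is `1`, so factorizations
are simply multisets of irreducible polynomials.) -/
def IsLengthFactorialNatPoly : Prop :=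
  (∀ p : Polynomial ℕ, p ≠ 0 → ¬IsUnit p →
    ∃ z : Multiset (Polynomial ℕ), (∀ q ∈ z, Irreducible q) ∧ z.prod = p) ∧
  ∀ z₁ z₂ : Multiset (Polynomial ℕ), (∀ q ∈ z₁, Irreducible q) → (∀ q ∈ z₂, Irreducible q) →
    z₁.prod = z₂.prod → Multiset.card z₁ = Multiset.card z₂ → z₁ = z₂

namespace Polynomial

variable {R : Type*} [CommSemiring R]

theorem coeff_X_add_C_mul_zero (b : R) (q : R[X]) : ((X + C b) * q).coeff 0 = b * q.coeff 0 := by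
  simp [add_mul]

theorem coeff_X_add_C_mul_succ (b : R) (q : R[X]) (n : ℕ) :
    ((X + C b) * q).coeff (n + 1) = q.coeff n + b * q.coeff (n + 1) := by
  simp [add_mul, coeff_X_mul]

variable [NoZeroDivisors R]

theorem Monic.irreducible_of_natDegree_eq_one {p : R[X]} (hp : p.Monic) (h1 : p.natDegree = 1) :
    Irreducible p := by
  have hp1 : p ≠ 1 := by rintro rfl; simp at h1
  rw [hp.irreducible_iff_lt_natDegree_lt hp1, h1]
  simp

/-- The hypothesis excludes the coefficients of `(X + b) * (X² + c₁ X + c₀)`. -/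
theorem Monic.irreducible_of_natDegree_eq_three {p : R[X]} (hp : p.Monic) (h3 : p.natDegree = 3)
    (h : ∀ b c₁ c₀ : R, p.coeff 2 = c₁ + b → p.coeff 1 = c₀ + b * c₁ → p.coeff 0 = b * c₀ → False) :
    Irreducible p := by
  have hp1 : p ≠ 1 := by rintro rfl; simp at h3
  rw [hp.irreducible_iff_lt_natDegree_lt hp1, h3]
  rintro q hq hdeg ⟨r, rfl⟩
  have hq1 : q.natDegree = 1 := by simpa using hdeg
  have hr : r.Monic := hq.of_mul_monic_left hp
  have hr2 : r.coeff 2 = 1 := by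
    rw [hq.natDegree_mul hr, hq1] at h3
    exact (show r.natDegree = 2 by omega) ▸ hr.coeff_natDegree
  obtain ⟨b, rfl⟩ : ∃ b, q = X + C b := ⟨_, hq.eq_X_add_C hq1⟩
  refine h b (r.coeff 1) (r.coeff 0) ?_ ?_ ?_
  · rw [coeff_X_add_C_mul_succ, hr2, mul_one]
  · rw [coeff_X_add_C_mul_succ]
  · rw [coeff_X_add_C_mul_zero]

end Polynomial

theorem pairwise_not_associated_of_monic {R : Type*} [Semiring R] {l : List R[X]}
    (hm : ∀ p ∈ l, p.Monic) (hl : l.Pairwise (· ≠ ·)) :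
    l.Pairwise fun p q => ¬Associated p q :=
  hl.imp_of_mem fun hp hq hne h => hne (eq_of_monic_of_associated (hm _ hp) (hm _ hq) h)

theorem irreducible_X_pow_three_add_two_mul_X_add_three :
    Irreducible (X ^ 3 + 2 * X + 3 : ℕ[X]) := by
  refine Monic.irreducible_of_natDegree_eq_three (by monicity!) (by compute_degree!) ?_
  intro b c₁ c₀ h₂ _ h₀
  replace h₂ : 0 = c₁ + b := by simpa [coeff_X] using h₂
  replace h₀ : 3 = b * c₀ := by simpa using h₀
  obtain rfl : b = 0 := by omega
  simp at h₀

theorem irreducible_X_pow_three_add_X_sq_add_X_add_six :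
    Irreducible (X ^ 3 + X ^ 2 + X + 6 : ℕ[X]) := by
  refine Monic.irreducible_of_natDegree_eq_three (by monicity!) (by compute_degree!) ?_
  intro b c₁ c₀ h₂ h₁ h₀
  replace h₂ : 1 = c₁ + b := by simpa [coeff_X] using h₂
  replace h₁ : 1 = c₀ + b * c₁ := by simpa [coeff_X] using h₁
  replace h₀ : 6 = b * c₀ := by simpa using h₀
  have hb : b ≤ 1 := by omega
  interval_cases b <;> omega

theorem not_isLengthFactorialNatPoly_of_ne {z₁ z₂ : Multiset ℕ[X]}
    (h₁ : ∀ q ∈ z₁, Irreducible q) (h₂ : ∀ q ∈ z₂, Irreducible q) (hprod : z₁.prod = z₂.prod)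
    (hcard : Multiset.card z₁ = Multiset.card z₂) (hne : z₁ ≠ z₂) :
    ¬IsLengthFactorialNatPoly := by
  rintro ⟨-, h⟩
  exact hne (h z₁ z₂ h₁ h₂ hprod hcard)

/-- In the semiring `ℕ[X]` of polynomials over the natural numbers, `X + 1`, `X + 2`,
`X³ + 2X + 3` and `X³ + X² + X + 6` are irreducible and pairwise non-associate, and
`(X + 1)(X³ + X² + X + 6) = (X + 2)(X³ + 2X + 3)`; so this element has two distinct
factorizations into irreducibles of the same length `2`, and hence the multiplicative
monoid of nonzero elements of `ℕ[X]` is not length-factorial. -/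
theorem natPoly_not_length_factorial :
    Irreducible (X + 1 : Polynomial ℕ) ∧
    Irreducible (X + 2 : Polynomial ℕ) ∧
    Irreducible (X ^ 3 + 2 * X + 3 : Polynomial ℕ) ∧
    Irreducible (X ^ 3 + X ^ 2 + X + 6 : Polynomial ℕ) ∧
    List.Pairwise (fun p q : Polynomial ℕ => ¬Associated p q)
      [X + 1, X + 2, X ^ 3 + 2 * X + 3, X ^ 3 + X ^ 2 + X + 6] ∧
    (X + 1 : Polynomial ℕ) * (X ^ 3 + X ^ 2 + X + 6) = (X + 2) * (X ^ 3 + 2 * X + 3) ∧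
    ({X + 1, X ^ 3 + X ^ 2 + X + 6} : Multiset (Polynomial ℕ)) ≠
      {X + 2, X ^ 3 + 2 * X + 3} ∧
    ¬IsLengthFactorialNatPoly := by
  have m₁ : (X + 1 : ℕ[X]).Monic := by monicity!
  have m₂ : (X + 2 : ℕ[X]).Monic := by monicity!
  have m₃ : (X ^ 3 + 2 * X + 3 : ℕ[X]).Monic := by monicity!
  have m₄ : (X ^ 3 + X ^ 2 + X + 6 : ℕ[X]).Monic := by monicity!
  have i₁ := m₁.irreducible_of_natDegree_eq_one (by compute_degree!)
  have i₂ := m₂.irreducible_of_natDegree_eq_one (by compute_degree!)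
  have i₃ := irreducible_X_pow_three_add_two_mul_X_add_three
  have i₄ := irreducible_X_pow_three_add_X_sq_add_X_add_six
  have hprod : (X + 1 : ℕ[X]) * (X ^ 3 + X ^ 2 + X + 6) = (X + 2) * (X ^ 3 + 2 * X + 3) := by ring
  -- The four constant terms `1, 2, 3, 6` already tell the polynomials apart.
  have coeff_zero_ne : ∀ p q : ℕ[X], p.coeff 0 ≠ q.coeff 0 → p ≠ q := fun _ _ h e => h (e ▸ rfl)
  have hne : ({X + 1, X ^ 3 + X ^ 2 + X + 6} : Multiset ℕ[X]) ≠ {X + 2, X ^ 3 + 2 * X + 3} :=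
    fun h => (by decide : ({1, 6} : Multiset ℕ) ≠ {2, 3})
      (by simpa using congrArg (Multiset.map (coeff · 0)) h)
  refine ⟨i₁, i₂, i₃, i₄, ?_, hprod, hne, ?_⟩
  · refine pairwise_not_associated_of_monic (by simp [m₁, m₂, m₃, m₄]) ?_
    exact List.Pairwise.of_map (coeff · 0) coeff_zero_ne (by simp)
  · exact not_isLengthFactorialNatPoly_of_ne (by simp [i₁, i₄]) (by simp [i₂, i₃])
      (by simpa using hprod) (by simp) hne
end
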